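/- arXiv:1311.7466 — 2 statements merged into one kernel-verified Lean document; each statement's English description precedes it below -/
import Mathlib

section
/- Let G=(V,E) be a single-source acyclic network, ξ⊆E a nonempty collection of channels, and ρ={e_1,…,e_l}⊆E an error pattern with e_j∈In(i_j) for 1≤j≤l. Construct a modified network from G by introducing a new source node s_ρ, adding the l new channels e_j'=(s_ρ, i_j) for 1≤j≤l, and deleting the channels e_1,…,e_l. Then rank_ξ(ρ), the rank of the error pattern ρ with respect to ξ in the original network G, equals the minimum cut capacity between s_ρ and ξ in the modified network. -/
open scoped BigOperators

/-- A single-source finite acyclic directed multigraph with unit-capacity channels.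
Acyclicity is witnessed by a rank function compatible with channel adjacency, and the
source node `s` has no incoming channels. -/
structure Network (V : Type*) (E : Type*) where
  tail : E → V
  head : E → V
  s : V
  no_in_source : ∀ e, head e ≠ s
  rk : E → ℕ
  acyclic : ∀ d e, head d = tail e → rk d < rk e

namespace Network

variable {V : Type*} {E : Type*}

/-- `p` is a nonempty directed path (a list of channels matching head-to-tail). -/
def IsPath (N : Network V E) (p : List E) : Prop :=
  p ≠ [] ∧ p.Chain' fun d e => N.head d = N.tail e

/-- `p` is a nonempty directed path starting at node `u`. -/
def PathFrom (N : Network V E) (p : List E) (u : V) : Prop :=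
  N.IsPath p ∧ ∀ e ∈ p.head?, N.tail e = u

variable [Fintype V] [Fintype E] [DecidableEq V] [DecidableEq E]

/-- `C` is a cut between the source and the collection `T` of nodes: after removing the
channels of `C` no directed path from the source reaches a node of `T`. -/
def IsCutNodes (N : Network V E) (C : Finset E) (T : Finset V) : Prop :=
  ∀ p : List E, N.PathFrom p N.s → (∃ e ∈ p.getLast?, N.head e ∈ T) → ∃ e ∈ p, e ∈ C

/-- The minimum cut capacity between the source and a collection `T` of nodes. -/
noncomputable def minCutNodes (N : Network V E) (T : Finset V) : ℕ :=
  sInf {n | ∃ C : Finset E, N.IsCutNodes C T ∧ C.card = n}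

/-- The minimum cut capacity `C_t` between the source and a node `t`. -/
noncomputable def minCutNode (N : Network V E) (t : V) : ℕ :=
  N.minCutNodes {t}

/-- `C` is a cut between the source and a collection `ξ` of channels (equivalently, a
cut between the source and the new nodes `n_e`, `e ∈ ξ`, in the network obtained by
subdividing every channel of `ξ`): every path from the source whose last channel lies
in `ξ` must meet `C`. -/
def IsCutChans (N : Network V E) (C : Finset E) (ξ : Finset E) : Prop :=
  ∀ p : List E, N.PathFrom p N.s → (∃ e ∈ p.getLast?, e ∈ ξ) → ∃ e ∈ p, e ∈ C

/-- The minimum cut capacity `C_ξ` between the source and a collection `ξ` of channels. -/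
noncomputable def minCutChans (N : Network V E) (ξ : Finset E) : ℕ :=
  sInf {n | ∃ C : Finset E, N.IsCutChans C ξ ∧ C.card = n}

end Network

section Codes

variable {V E : Type*} [Fintype V] [Fintype E] [DecidableEq V] [DecidableEq E]
variable (F : Type*) [Field F]

/-- `f` is the family of global encoding kernels of the `ω`-dimensional linear network
code with local encoding coefficients `k` (between adjacent real channels) and `ks`
(from the `ω` imaginary message channels at the source): the kernels of the imaginary
message channels form the standard basis of `F^ω` and
`f_e = ∑_{d ∈ In(tail e)} k_{d,e} • f_d`. -/
def IsGlobalKernel (N : Network V E) (ω : ℕ) (k : E → E → F) (ks : Fin ω → E → F)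
    (f : E → Fin ω → F) : Prop :=
  ∀ e, f e = (∑ d : E, if N.head d = N.tail e then k d e • f d else 0)
    + ∑ i : Fin ω, (if N.tail e = N.s then ks i e else 0) • (Pi.single i 1 : Fin ω → F)

/-- `f` is the family of extended global encoding kernels (coordinates indexed by
`Fin ω ⊕ E`, i.e. by `In(s) ∪ E`) of the `ω`-dimensional linear network
error-correction code with local encoding coefficients `k`, `ks`:
`f̃_e = ∑_{d ∈ In(tail e)} k_{d,e} • f̃_d + 1_e`. -/
def IsExtKernel (N : Network V E) (ω : ℕ) (k : E → E → F) (ks : Fin ω → E → F)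
    (f : E → (Fin ω ⊕ E) → F) : Prop :=
  ∀ e, f e = (∑ d : E, if N.head d = N.tail e then k d e • f d else 0)
    + (∑ i : Fin ω, (if N.tail e = N.s then ks i e else 0) • (Pi.single (Sum.inl i) 1 : (Fin ω ⊕ E) → F))
    + (Pi.single (Sum.inr e) 1 : (Fin ω ⊕ E) → F)

variable {ω : ℕ}

/-- The row of the decoding matrix `F̃_T` of a collection `T` of nodes indexed by
`d ∈ In(s) ∪ E` (extended by zero outside the coordinates `In(T)`). -/
def rowT (N : Network V E) (f : E → (Fin ω ⊕ E) → F) (T : Finset V)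
    (d : Fin ω ⊕ E) : E → F :=
  fun e => if N.head e ∈ T then f e d else 0

/-- The message space `Φ(T)` of a collection `T` of nodes. -/
def PhiT (N : Network V E) (f : E → (Fin ω ⊕ E) → F) (T : Finset V) :
    Submodule F (E → F) :=
  Submodule.span F (Set.range fun i : Fin ω => rowT F N f T (Sum.inl i))

/-- The error space `Δ(T, ρ)` of an error pattern `ρ` with respect to `T`. -/
def DeltaT (N : Network V E) (f : E → (Fin ω ⊕ E) → F) (T : Finset V)
    (ρ : Finset E) : Submodule F (E → F) :=
  Submodule.span F ((fun e => rowT F N f T (Sum.inr e)) '' (ρ : Set E))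

/-- The minimum distance `d_min^{(T)}` at a collection `T` of nodes. -/
noncomputable def dminT (N : Network V E) (f : E → (Fin ω ⊕ E) → F) (T : Finset V) : ℕ :=
  sInf {n | ∃ ρ : Finset E, ρ.card = n ∧ DeltaT F N f T ρ ⊓ PhiT F N f T ≠ ⊥}

/-- `ρ₁ ≺_T ρ₂` : `Δ(T,ρ₁) ⊆ Δ(T,ρ₂)` for every `ω`-dimensional `F`-valued LNEC code
on the network. -/
def DominatesT (N : Network V E) (ω : ℕ) (T : Finset V) (ρ₁ ρ₂ : Finset E) : Prop :=
  ∀ (k : E → E → F) (ks : Fin ω → E → F) (f : E → (Fin ω ⊕ E) → F),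
    IsExtKernel F N ω k ks f → DeltaT F N f T ρ₁ ≤ DeltaT F N f T ρ₂

/-- `rank_T(ρ)`, the rank of an error pattern with respect to `T`. -/
noncomputable def rankT (N : Network V E) (ω : ℕ) (T : Finset V) (ρ : Finset E) : ℕ :=
  sInf {n | ∃ ρ' : Finset E, DominatesT F N ω T ρ ρ' ∧ ρ'.card = n}

/-- The row of the decoding matrix `F̃_ξ` of a collection `ξ` of channels indexed by
`d ∈ In(s) ∪ E` (extended by zero outside the coordinates `ξ`). -/
def rowX (N : Network V E) (f : E → (Fin ω ⊕ E) → F) (ξ : Finset E)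
    (d : Fin ω ⊕ E) : E → F :=
  fun e => if e ∈ ξ then f e d else 0

/-- The message space `Φ(ξ)` of a collection `ξ` of channels. -/
def PhiX (N : Network V E) (f : E → (Fin ω ⊕ E) → F) (ξ : Finset E) :
    Submodule F (E → F) :=
  Submodule.span F (Set.range fun i : Fin ω => rowX F N f ξ (Sum.inl i))

/-- The error space `Δ(ξ, ρ)` of an error pattern `ρ` with respect to `ξ`. -/
def DeltaX (N : Network V E) (f : E → (Fin ω ⊕ E) → F) (ξ : Finset E)
    (ρ : Finset E) : Submodule F (E → F) :=
  Submodule.span F ((fun e => rowX F N f ξ (Sum.inr e)) '' (ρ : Set E))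

/-- The minimum distance `d_min^{(ξ)}` at a collection `ξ` of channels. -/
noncomputable def dminX (N : Network V E) (f : E → (Fin ω ⊕ E) → F) (ξ : Finset E) : ℕ :=
  sInf {n | ∃ ρ : Finset E, ρ.card = n ∧ DeltaX F N f ξ ρ ⊓ PhiX F N f ξ ≠ ⊥}

/-- `ρ₁ ≺_ξ ρ₂` : `Δ(ξ,ρ₁) ⊆ Δ(ξ,ρ₂)` for every `ω`-dimensional `F`-valued LNEC code
on the network. -/
def DominatesX (N : Network V E) (ω : ℕ) (ξ : Finset E) (ρ₁ ρ₂ : Finset E) : Prop :=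
  ∀ (k : E → E → F) (ks : Fin ω → E → F) (f : E → (Fin ω ⊕ E) → F),
    IsExtKernel F N ω k ks f → DeltaX F N f ξ ρ₁ ≤ DeltaX F N f ξ ρ₂

/-- `rank_ξ(ρ)`, the rank of an error pattern with respect to `ξ`. -/
noncomputable def rankX (N : Network V E) (ω : ℕ) (ξ : Finset E) (ρ : Finset E) : ℕ :=
  sInf {n | ∃ ρ' : Finset E, DominatesX F N ω ξ ρ ρ' ∧ ρ'.card = n}

/-- Regular LNEC code: `dim Φ(t) = ω` for every non-source node with `C_t ≥ ω`. -/
def Regular (N : Network V E) (f : E → (Fin ω ⊕ E) → F) : Prop :=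
  ∀ t : V, t ≠ N.s → ω ≤ N.minCutNode t →
    Module.finrank F (PhiT F N f ({t} : Finset V)) = ω

/-- Strongly regular LNEC code: `dim Φ(t) = min{ω, C_t}` for every non-source node. -/
def StronglyRegular (N : Network V E) (f : E → (Fin ω ⊕ E) → F) : Prop :=
  ∀ t : V, t ≠ N.s →
    Module.finrank F (PhiT F N f ({t} : Finset V)) = min ω (N.minCutNode t)

/-- Strongly sup-regular LNEC code: `dim Φ(T) = min{ω, C_T}` for every nonempty
collection of non-source nodes. -/
def StronglySupRegular (N : Network V E) (f : E → (Fin ω ⊕ E) → F) : Prop :=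
  ∀ T : Finset V, T.Nonempty → N.s ∉ T →
    Module.finrank F (PhiT F N f T) = min ω (N.minCutNodes T)

/-- Channel-regular LNEC code: `dim Φ(ξ) = min{ω, C_ξ}` for every nonempty collection
of channels. -/
def ChannelRegular (N : Network V E) (f : E → (Fin ω ⊕ E) → F) : Prop :=
  ∀ ξ : Finset E, ξ.Nonempty →
    Module.finrank F (PhiX F N f ξ) = min ω (N.minCutChans ξ)

/-- LNEC multicast MDS code. -/
def IsMulticastMDS (N : Network V E) (f : E → (Fin ω ⊕ E) → F) : Prop :=
  Regular F N f ∧ ∀ t : V, t ≠ N.s → ω ≤ N.minCutNode t →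
    dminT F N f {t} = N.minCutNode t - ω + 1

/-- LNEC broadcast MDS code. -/
def IsBroadcastMDS (N : Network V E) (f : E → (Fin ω ⊕ E) → F) : Prop :=
  StronglyRegular F N f ∧ ∀ t : V, t ≠ N.s →
    (ω ≤ N.minCutNode t → dminT F N f {t} = N.minCutNode t - ω + 1) ∧
    (N.minCutNode t < ω → dminT F N f {t} = 1)

/-- LNEC dispersion MDS code. -/
def IsDispersionMDS (N : Network V E) (f : E → (Fin ω ⊕ E) → F) : Prop :=
  StronglySupRegular F N f ∧ ∀ T : Finset V, T.Nonempty → N.s ∉ T →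
    (ω ≤ N.minCutNodes T → dminT F N f T = N.minCutNodes T - ω + 1) ∧
    (N.minCutNodes T < ω → dminT F N f T = 1)

/-- LNEC generic MDS code. -/
def IsGenericMDS (N : Network V E) (f : E → (Fin ω ⊕ E) → F) : Prop :=
  ChannelRegular F N f ∧ ∀ ξ : Finset E, ξ.Nonempty →
    (ω ≤ N.minCutChans ξ → dminX F N f ξ = N.minCutChans ξ - ω + 1) ∧
    (N.minCutChans ξ < ω → dminX F N f ξ = 1)

/-- `R_t(δ_t)`: the set of error patterns `ρ` with `|ρ| = rank_t(ρ) = δ_t`. -/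
def Rset (N : Network V E) (ω : ℕ) (t : V) : Set (Finset E) :=
  {ρ | ρ.card = N.minCutNode t - ω ∧ rankT F N ω ({t} : Finset V) ρ = N.minCutNode t - ω}

end Codes

/-- The modified network of `N` for an error pattern `ρ`: a new source node `s_ρ` is
introduced, and every channel `e ∈ ρ` is replaced by the new channel
`e' = (s_ρ, head e)` (all other channels are unchanged). -/
def modNet {V E : Type*} (N : Network V E) (ρ : Finset E) [DecidableEq E] :
    Network (V ⊕ Unit) E where
  tail e := if e ∈ ρ then Sum.inr () else Sum.inl (N.tail e)
  head e := Sum.inl (N.head e)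
  s := Sum.inr ()
  no_in_source e := by simp
  rk := N.rk
  acyclic d e h := by
    by_cases he : e ∈ ρ
    · simp [he] at h
    · simp only [he, if_neg, if_false] at h
      exact N.acyclic d e (Sum.inl.inj h)

/-! A set `C` of channels dominates `ρ` exactly when it is a cut between `s_ρ` and `ξ` in the
modified network, so `rank_ξ(ρ)` and the minimum cut are infima of the same set.

If `C` is such a cut, the rows of `F̃_ξ` obey the backward recursion
`row(g) = ∑_{d ∈ Out(head g)} k_{g,d} row(d)` for `g ∉ ξ`, and descending induction along the
acyclic order puts every row of `ρ` in the span of the rows of `C`. Conversely, if some path from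
`s_ρ` to `ξ` avoids `C`, the code routing along that path has a `1` in the row of its first
channel `e ∈ ρ` at the coordinate of its last channel, where every row of `C` vanishes. -/

open Sum

namespace Network

variable {V E : Type*} {N : Network V E}

theorem IsPath.nodup {p : List E} (hp : N.IsPath p) : p.Nodup :=
  have hrk : (p.map N.rk).IsChain (· < ·) :=
    List.isChain_map_of_isChain N.rk (fun d e h => N.acyclic d e h) hp.2
  hrk.pairwise.nodup.of_map N.rk

end Network

section ModNet

variable {V E : Type*} [DecidableEq E] {N : Network V E} {ρ : Finset E}

theorem modNet_tail_eq_s_iff {e : E} : (modNet N ρ).tail e = (modNet N ρ).s ↔ e ∈ ρ := by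
  by_cases he : e ∈ ρ <;> simp [modNet, he]

theorem modNet_head_eq_tail_iff {d e : E} :
    (modNet N ρ).head d = (modNet N ρ).tail e ↔ e ∉ ρ ∧ N.head d = N.tail e := by
  by_cases he : e ∈ ρ <;> simp [modNet, he]

theorem Network.IsPath.of_modNet {p : List E} (hp : (modNet N ρ).IsPath p) : N.IsPath p :=
  ⟨hp.1, hp.2.imp fun _ _ h => (modNet_head_eq_tail_iff.1 h).2⟩

theorem modNet_isPath_cons_cons {g d : E} {q : List E} :
    (modNet N ρ).IsPath (g :: d :: q) ↔
      (d ∉ ρ ∧ N.head g = N.tail d) ∧ (modNet N ρ).IsPath (d :: q) := by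
  simp only [Network.IsPath, ne_eq, reduceCtorEq, not_false_eq_true, true_and,
    ← modNet_head_eq_tail_iff]
  exact List.isChain_cons_cons

theorem modNet_pathFrom_s_iff {e : E} {q : List E} :
    (modNet N ρ).PathFrom (e :: q) (modNet N ρ).s ↔ (modNet N ρ).IsPath (e :: q) ∧ e ∈ ρ := by
  simp [Network.PathFrom, modNet_tail_eq_s_iff]

end ModNet

section Routing

variable {E : Type*} (F : Type*) [Field F]

open Classical in
noncomputable def routingCoeff (p : List E) (d e : E) : F :=
  if ∃ i, p[i]? = some d ∧ p[i + 1]? = some e then 1 else 0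

variable {F} {p : List E}

theorem routingCoeff_getElem_zero (hp : p.Nodup) (h : 0 < p.length) (d : E) :
    routingCoeff F p d p[0] = 0 := by
  rw [routingCoeff, if_neg]
  rintro ⟨i, -, hi⟩
  have hlt := (List.getElem?_eq_some_iff.1 hi).1
  exact i.succ_ne_zero ((List.getElem?_inj hlt hp).1 (hi.trans (List.getElem?_eq_getElem h).symm))

theorem routingCoeff_getElem_succ [DecidableEq E] (hp : p.Nodup) {j : ℕ} (h : j + 1 < p.length)
    (d : E) :
    routingCoeff F p d p[j + 1] = if d = p[j] then 1 else 0 := by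
  by_cases hd : d = p[j]
  · rw [if_pos hd, routingCoeff, if_pos ⟨j, by simp [hd], by simp⟩]
  · rw [if_neg hd, routingCoeff, if_neg]
    rintro ⟨i, hi, hi1⟩
    have hlt := (List.getElem?_eq_some_iff.1 hi1).1
    obtain rfl : i = j := by
      simpa using (List.getElem?_inj hlt hp).1 (hi1.trans (List.getElem?_eq_getElem h).symm)
    exact hd (List.getElem?_eq_some_iff.1 hi).2.symm

end Routing

section Codes

variable {V E : Type*} [Fintype E] [DecidableEq V] [DecidableEq E] {F : Type*} [Field F]
  {N : Network V E} {ω : ℕ} {k : E → E → F} {ks : Fin ω → E → F} {f : E → (Fin ω ⊕ E) → F}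

variable (F N ω) in
theorem exists_isExtKernel (k : E → E → F) (ks : Fin ω → E → F) :
    ∃ f, IsExtKernel F N ω k ks f := by
  let step (e : E) (rec : ∀ d, N.rk d < N.rk e → (Fin ω ⊕ E) → F) : (Fin ω ⊕ E) → F :=
    (∑ d : E, if h : N.head d = N.tail e then k d e • rec d (N.acyclic d e h) else 0)
      + (∑ i : Fin ω, (if N.tail e = N.s then ks i e else 0) • Pi.single (inl i) 1)
      + Pi.single (inr e) 1
  refine ⟨(measure N.rk).wf.fix step, fun e => ?_⟩
  rw [WellFounded.fix_eq]
  simp only [step, dite_eq_ite]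

namespace IsExtKernel

theorem apply_inr (hf : IsExtKernel F N ω k ks f) (e g : E) :
    f e (inr g) = ∑ d, f d (inr g) * (if N.head d = N.tail e then k d e else 0)
      + if g = e then 1 else 0 := by
  rw [hf e]
  simp [Finset.sum_apply, ite_apply, Pi.single_apply, mul_ite, mul_comm]

theorem apply_inr_backward (hf : IsExtKernel F N ω k ks f) (e g : E) :
    f e (inr g) = ∑ d, (if N.head g = N.tail d then k g d else 0) * f e (inr d)
      + if g = e then 1 else 0 := by
  let A : Matrix E E F := Matrix.of fun g e => f e (inr g)
  let K : Matrix E E F := Matrix.of fun d e => if N.head d = N.tail e then k d e else 0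
  have hA : A = A * K + 1 := by
    ext g e
    simpa [A, K, Matrix.mul_apply, Matrix.one_apply] using hf.apply_inr e g
  -- a one-sided inverse of a square matrix over a field is two-sided
  have hA' : (1 - K) * A = 1 :=
    mul_eq_one_comm.1 (by rw [mul_sub, mul_one, sub_eq_iff_eq_add']; exact hA)
  rw [sub_mul, one_mul, sub_eq_iff_eq_add'] at hA'
  simpa [A, K, Matrix.mul_apply, Matrix.one_apply] using congrFun₂ hA' g e

theorem rowX_inr_eq_sum (hf : IsExtKernel F N ω k ks f) {ξ : Finset E} {g : E} (hg : g ∉ ξ) :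
    rowX F N f ξ (inr g) =
      ∑ d, (if N.head g = N.tail d then k g d else 0) • rowX F N f ξ (inr d) := by
  funext e
  by_cases he : e ∈ ξ
  · have hge : g ≠ e := fun h => hg (h ▸ he)
    simp [rowX, he, Finset.sum_apply, ite_apply, hf.apply_inr_backward e g, hge]
  · simp [rowX, he, Finset.sum_apply, ite_apply]

theorem rowX_inr_mem_deltaX_of_isCutChans (hf : IsExtKernel F N ω k ks f) {ξ ρ C : Finset E}
    (hC : (modNet N ρ).IsCutChans C ξ) (g : E)
    (hg : ∀ q, (modNet N ρ).IsPath (g :: q) → (∃ e ∈ (g :: q).getLast?, e ∈ ξ) →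
      ∃ c ∈ g :: q, c ∈ C) :
    rowX F N f ξ (inr g) ∈ DeltaX F N f ξ C := by
  have : IsTrans E fun d g => N.rk g < N.rk d := ⟨fun _ _ _ h₁ h₂ => h₂.trans h₁⟩
  have : Std.Irrefl fun d g : E => N.rk g < N.rk d := ⟨fun _ => lt_irrefl _⟩
  induction g using (Finite.wellFounded_of_trans_of_irrefl fun d g : E => N.rk g < N.rk d).induction
    with | _ g ih => ?_
  by_cases hgC : g ∈ C
  · exact Submodule.subset_span ⟨g, hgC, rfl⟩
  have hgξ : g ∉ ξ := fun hgξ => by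
    obtain ⟨c, hc, hcC⟩ := hg [] ⟨List.cons_ne_nil _ _, List.isChain_singleton _⟩ ⟨g, rfl, hgξ⟩
    exact hgC (List.mem_singleton.1 hc ▸ hcC)
  rw [hf.rowX_inr_eq_sum hgξ]
  refine Submodule.sum_mem _ fun d _ => ?_
  by_cases hgd : N.head g = N.tail d
  swap
  · simp [hgd]
  refine Submodule.smul_mem _ _ (ih d (N.acyclic g d hgd) fun q hq hlast => ?_)
  by_cases hdρ : d ∈ ρ
  · exact hC (d :: q) (modNet_pathFrom_s_iff.2 ⟨hq, hdρ⟩) hlast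
  · obtain ⟨c, hc, hcC⟩ := hg (d :: q) (modNet_isPath_cons_cons.2 ⟨⟨hdρ, hgd⟩, hq⟩)
      (by rwa [List.getLast?_cons_cons])
    exact ⟨c, (List.mem_cons.1 hc).resolve_left (by rintro rfl; exact hgC hcC), hcC⟩

end IsExtKernel

theorem dominatesX_of_isCutChans {ξ ρ C : Finset E}
    (hC : (modNet N ρ).IsCutChans C ξ) : DominatesX F N ω ξ ρ C := by
  intro k ks f hf
  refine Submodule.span_le.2 ?_
  rintro _ ⟨e, he, rfl⟩
  exact hf.rowX_inr_mem_deltaX_of_isCutChans hC e fun q hq =>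
    hC (e :: q) (modNet_pathFrom_s_iff.2 ⟨hq, he⟩)

end Codes

section RoutingKernel

variable {V E : Type*} [Fintype E] [DecidableEq V] [DecidableEq E] {F : Type*} [Field F]
  {N : Network V E} {ω : ℕ} {ks : Fin ω → E → F} {f : E → (Fin ω ⊕ E) → F} {p : List E}

theorem IsExtKernel.apply_getElem_inr_of_routingCoeff (hp : N.IsPath p)
    (hf : IsExtKernel F N ω (routingCoeff F p) ks f) (j : ℕ) (hj : j < p.length) (g : E) :
    f p[j] (inr g) = if g ∈ p.take (j + 1) then 1 else 0 := by
  induction j with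
  | zero =>
    rw [hf.apply_inr, Finset.sum_eq_zero fun d _ => by
      rw [routingCoeff_getElem_zero hp.nodup hj, ite_self, mul_zero], zero_add]
    cases p with
    | nil => simp at hj
    | cons a q => simp
  | succ j ih =>
    rw [hf.apply_inr, Finset.sum_eq_single p[j], routingCoeff_getElem_succ hp.nodup hj,
      if_pos (List.isChain_iff_getElem.1 hp.2 j hj), if_pos rfl, mul_one, ih (by omega),
      List.take_add_one (i := j + 1)]
    · have hnew : p[j + 1] ∉ p.take (j + 1) := by
        have := hp.nodup.sublist (List.take_sublist (j + 2) p)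
        rw [List.take_add_one, List.getElem?_eq_getElem hj, Option.toList_some,
          List.nodup_append] at this
        exact fun h => this.2.2 _ h _ (List.mem_singleton_self _) rfl
      simp only [List.getElem?_eq_getElem hj, Option.toList_some, List.mem_append,
        List.mem_singleton]
      by_cases hg : g = p[j + 1]
      · simp [hg, hnew]
      · simp [hg]
    · intro d _ hd
      rw [routingCoeff_getElem_succ hp.nodup hj, if_neg hd]
      simp
    · simp

theorem IsExtKernel.apply_getLast_inr_of_routingCoeff (hp : N.IsPath p)
    (hf : IsExtKernel F N ω (routingCoeff F p) ks f) (g : E) :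
    f (p.getLast hp.1) (inr g) = if g ∈ p then 1 else 0 := by
  rw [List.getLast_eq_getElem, hf.apply_getElem_inr_of_routingCoeff hp,
    Nat.sub_add_cancel (List.length_pos_of_ne_nil hp.1), List.take_length]

end RoutingKernel

section Rank

variable {V E : Type*} [Fintype E] [DecidableEq V] [DecidableEq E] {F : Type*} [Field F]
  {N : Network V E} {ω : ℕ} {ξ ρ C : Finset E}

theorem isCutChans_of_dominatesX (h : DominatesX F N ω ξ ρ C) :
    (modNet N ρ).IsCutChans C ξ := by
  rintro (_ | ⟨e, q⟩) hp ⟨c, hc, hcξ⟩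
  · exact absurd rfl hp.1.1
  obtain ⟨hpath, he⟩ := modNet_pathFrom_s_iff.1 hp
  by_contra! hCp
  obtain ⟨f, hf⟩ := exists_isExtKernel F N ω (routingCoeff F (e :: q)) 0
  have hrow (g : E) : rowX F N f ξ (inr g) c = if g ∈ e :: q then 1 else 0 := by
    rw [List.getLast?_eq_some_getLast (List.cons_ne_nil e q), Option.mem_some_iff] at hc
    rw [rowX, if_pos hcξ, ← hc, hf.apply_getLast_inr_of_routingCoeff hpath.of_modNet]
  have hker : DeltaX F N f ξ C ≤ LinearMap.ker (LinearMap.proj c) :=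
    Submodule.span_le.2 <| by
      rintro _ ⟨g, hg, rfl⟩
      have hgp : g ∉ e :: q := fun hgp => hCp g hgp hg
      simp only [SetLike.mem_coe, LinearMap.mem_ker, LinearMap.proj_apply, hrow, if_neg hgp]
  have := hker (h _ _ _ hf (Submodule.subset_span ⟨e, he, rfl⟩))
  simp [hrow] at this

theorem dominatesX_iff_isCutChans : DominatesX F N ω ξ ρ C ↔ (modNet N ρ).IsCutChans C ξ :=
  ⟨isCutChans_of_dominatesX, dominatesX_of_isCutChans⟩

end Rank

theorem statement8_general {V E : Type*} [Fintype E] [DecidableEq V] [DecidableEq E]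
    (F : Type*) [Field F] (N : Network V E) (ω : ℕ)
    (ξ : Finset E) (ρ : Finset E) :
    rankX F N ω ξ ρ = (modNet N ρ).minCutChans ξ := by
  simp only [rankX, Network.minCutChans, dominatesX_iff_isCutChans]

/-- The rank `rank_ξ(ρ)` of an error pattern `ρ` with respect to a
nonempty collection `ξ` of channels equals the minimum cut capacity between the new
source `s_ρ` and `ξ` in the modified network. -/
theorem statement8 {V E : Type*} [Fintype V] [Fintype E] [DecidableEq V] [DecidableEq E]
    (F : Type*) [Field F] [Fintype F] (N : Network V E) (ω : ℕ) (hω : 1 ≤ ω)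
    (ξ : Finset E) (hξ : ξ.Nonempty) (ρ : Finset E) :
    rankX F N ω ξ ρ = (modNet N ρ).minCutChans ξ :=
  statement8_general F N ω ξ ρ
end

section
/- (Strongly Extended Singleton Bound) For any channel-regular ω-dimensional linear network error correction code on a single-source acyclic network G=(V,E) and any nonempty collection ξ⊆E of channels, the minimum distance at ξ satisfies d_min^{(ξ)}(G) ≤ δ_ξ+1 if C_ξ ≥ ω, and d_min^{(ξ)}(G) ≤ 1 if C_ξ < ω. -/
open scoped BigOperators

/-!
A minimum cut `D` between the source and `ξ` carries everything the source sends to `ξ`: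
for each message `i`, errors injected on `D` can reproduce on `D` what message `i` produces
there (the error-to-channel map on `D` is unitriangular with respect to the rank function),
and then they reproduce it on all of `ξ`, because `ξ` sees the source only through `D`.
Hence `Φ(ξ) ≤ Δ(ξ, D)`. If `Φ(ξ)` has dimension `m ≥ 1`, an error pattern `ρ ⊆ D` with
`|ρ| = |D| - m + 1` must meet `Φ(ξ)`: otherwise `Φ(ξ)` would embed into `Δ(ξ, D) / Δ(ξ, ρ)`,
whose dimension is at most `|D \ ρ| = m - 1`. Channel-regularity gives `m = min ω C_ξ`.
-/

namespace Network

variable {V E : Type*} (N : Network V E)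

lemma PathFrom.append_singleton {p : List E} {u : V} {d e : E} (hp : N.PathFrom p u)
    (hd : p.getLast? = some d) (hde : N.head d = N.tail e) : N.PathFrom (p ++ [e]) u := by
  obtain ⟨⟨hne, hchain⟩, hstart⟩ := hp
  obtain ⟨a, t, rfl⟩ := List.exists_cons_of_ne_nil hne
  refine ⟨⟨by simp, List.isChain_append.mpr ⟨hchain, List.isChain_singleton e, ?_⟩⟩, ?_⟩
  · intro x hx y hy
    rw [hd, Option.mem_some_iff] at hx
    rw [List.head?_cons, Option.mem_some_iff] at hy
    subst hx hy
    exact hde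
  · simpa using hstart

lemma isCutChans_self (ξ : Finset E) : N.IsCutChans ξ ξ := by
  rintro p - ⟨e, he, heξ⟩
  exact ⟨e, List.mem_of_getLast? he, heξ⟩

lemma exists_isCutChans_card_eq_minCutChans (ξ : Finset E) :
    ∃ D, N.IsCutChans D ξ ∧ D.card = N.minCutChans ξ :=
  Nat.sInf_mem (s := {n | ∃ C, N.IsCutChans C ξ ∧ C.card = n})
    ⟨ξ.card, ξ, N.isCutChans_self ξ, rfl⟩

variable {N}

lemma IsCutChans.mono {D ξ ξ' : Finset E} (hD : N.IsCutChans D ξ) (h : ξ' ⊆ ξ) :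
    N.IsCutChans D ξ' := by
  rintro p hp ⟨e, he, heξ'⟩
  exact hD p hp ⟨e, he, h heξ'⟩

lemma IsCutChans.tail_ne_source {D : Finset E} {e : E} (hD : N.IsCutChans D {e})
    (he : e ∉ D) : N.tail e ≠ N.s := by
  intro hs
  obtain ⟨c, hc, hcD⟩ := hD [e] ⟨⟨by simp, List.isChain_singleton e⟩, fun x hx => by
    rw [List.head?_cons, Option.mem_some_iff] at hx
    exact hx ▸ hs⟩
    ⟨e, by simp, Finset.mem_singleton_self e⟩
  rw [List.mem_singleton] at hc
  exact he (hc ▸ hcD)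

lemma IsCutChans.of_head_eq_tail {D : Finset E} {d e : E} (hD : N.IsCutChans D {e})
    (he : e ∉ D) (hde : N.head d = N.tail e) : N.IsCutChans D {d} := by
  rintro p hp ⟨d', hd', hd'd⟩
  rw [Finset.mem_singleton.mp hd'd] at hd'
  obtain ⟨c, hc, hcD⟩ := hD (p ++ [e]) (hp.append_singleton N hd' hde)
    ⟨e, List.getLast?_concat, Finset.mem_singleton_self e⟩
  rcases List.mem_append.mp hc with hc | hc
  · exact ⟨c, hc, hcD⟩
  · rw [List.mem_singleton] at hc
    exact absurd (hc ▸ hcD) he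

end Network

section DecodingSpaces

variable {V E F : Type*} [DecidableEq E] [Field F] {N : Network V E} {ω : ℕ}
  {f : E → (Fin ω ⊕ E) → F}

lemma deltaX_union (ξ ρ σ : Finset E) :
    DeltaX F N f ξ (ρ ∪ σ) = DeltaX F N f ξ ρ ⊔ DeltaX F N f ξ σ := by
  rw [DeltaX, Finset.coe_union, Set.image_union, Submodule.span_union, DeltaX, DeltaX]

variable [Fintype E]

lemma finrank_deltaX_le_card (ξ ρ : Finset E) : Module.finrank F (DeltaX F N f ξ ρ) ≤ ρ.card := by
  classical
  rw [DeltaX, ← Finset.coe_image]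
  exact (finrank_span_finset_le_card _).trans Finset.card_image_le

lemma deltaX_inf_phiX_ne_bot {ξ D ρ : Finset E} (hΦ : PhiX F N f ξ ≤ DeltaX F N f ξ D)
    (hρ : ρ ⊆ D) (hcard : D.card < ρ.card + Module.finrank F (PhiX F N f ξ)) :
    DeltaX F N f ξ ρ ⊓ PhiX F N f ξ ≠ ⊥ := by
  intro hbot
  have hdisjoint := Submodule.finrank_sup_add_finrank_inf_eq (DeltaX F N f ξ ρ) (PhiX F N f ξ)
  rw [hbot, finrank_bot] at hdisjoint
  have hsup : DeltaX F N f ξ ρ ⊔ PhiX F N f ξ ≤ DeltaX F N f ξ ρ ⊔ DeltaX F N f ξ (D \ ρ) := by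
    rw [← deltaX_union, Finset.union_sdiff_of_subset hρ]
    exact sup_le (Submodule.span_mono (Set.image_mono hρ)) hΦ
  have hle := (Submodule.finrank_mono hsup).trans
    (Submodule.finrank_add_le_finrank_add_finrank _ _)
  have hrest := finrank_deltaX_le_card (N := N) (f := f) ξ (D \ ρ)
  rw [Finset.card_sdiff_of_subset hρ] at hrest
  have := Finset.card_le_card hρ
  omega

lemma dminX_le_of_phiX_le_deltaX {ξ D : Finset E} (hΦ : PhiX F N f ξ ≤ DeltaX F N f ξ D) :
    dminX F N f ξ ≤ D.card - Module.finrank F (PhiX F N f ξ) + 1 := by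
  rcases Nat.eq_zero_or_pos (Module.finrank F (PhiX F N f ξ)) with h0 | hpos
  · have hempty : {n | ∃ ρ : Finset E, ρ.card = n ∧ DeltaX F N f ξ ρ ⊓ PhiX F N f ξ ≠ ⊥} = ∅ := by
      simp [Submodule.finrank_eq_zero.mp h0]
    rw [dminX, hempty, Nat.sInf_empty]
    exact Nat.zero_le _
  obtain ⟨ρ, hρ, hcard⟩ := Finset.exists_subset_card_eq
    (show D.card - Module.finrank F (PhiX F N f ξ) + 1 ≤ D.card by
      have := (Submodule.finrank_mono hΦ).trans (finrank_deltaX_le_card ξ D)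
      omega)
  exact Nat.sInf_le ⟨ρ, hcard, deltaX_inf_phiX_ne_bot hΦ hρ (by omega)⟩

end DecodingSpaces

section ExtKernel

variable {V E F : Type*} [Fintype E] [DecidableEq V] [DecidableEq E] [Field F]
  {N : Network V E} {ω : ℕ} {k : E → E → F} {ks : Fin ω → E → F} {f : E → (Fin ω ⊕ E) → F}

namespace IsExtKernel

lemma apply_inr_of_rk_le (hf : IsExtKernel F N ω k ks f) {e e' : E} (h : N.rk e ≤ N.rk e') :
    f e (Sum.inr e') = if e = e' then 1 else 0 := by
  have hupstream : ∀ d, N.head d = N.tail e → f d (Sum.inr e') = 0 := fun d hd => by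
    have hlt := N.acyclic d e hd
    rw [hf.apply_inr_of_rk_le (hlt.le.trans h), if_neg (by rintro rfl; omega)]
  rw [hf e]
  simp only [Pi.add_apply, Finset.sum_apply]
  rw [Finset.sum_eq_zero fun d _ => by split_ifs with hd <;> simp [hupstream d, *]]
  simp [Pi.single_apply, eq_comm]
termination_by N.rk e
decreasing_by exact hlt

lemma mem_span_of_isCutChans (hf : IsExtKernel F N ω k ks f) {D : Finset E} {e : E}
    (hD : N.IsCutChans D {e}) :
    f e ∈ Submodule.span F
      (f '' D ∪ (fun d => (Pi.single (Sum.inr d) 1 : Fin ω ⊕ E → F)) '' (↑D)ᶜ) := by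
  by_cases he : e ∈ D
  · exact Submodule.subset_span (Or.inl ⟨e, he, rfl⟩)
  rw [hf e]
  refine add_mem (add_mem (Submodule.sum_mem _ fun d _ => ?_) ?_)
    (Submodule.subset_span (Or.inr ⟨e, he, rfl⟩))
  · split_ifs with hd
    · have hlt := N.acyclic d e hd
      exact Submodule.smul_mem _ _ (hf.mem_span_of_isCutChans (hD.of_head_eq_tail he hd))
    · exact zero_mem _
  · simp [hD.tail_ne_source he]
termination_by N.rk e
decreasing_by exact hlt

lemma exists_sum_mul_apply_inr_eq (hf : IsExtKernel F N ω k ks f) (D : Finset E) (t : E → F) :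
    ∃ z : E → F, ∀ c ∈ D, ∑ c' ∈ D, z c' * f c (Sum.inr c') = t c := by
  induction D using Finset.induction_on_max_value N.rk with
  | empty => exact ⟨0, by simp⟩
  | insert a D ha hmax ih =>
    obtain ⟨z, hz⟩ := ih
    set α := t a - ∑ c' ∈ D, z c' * f a (Sum.inr c')
    have hsum : ∀ c, ∑ c' ∈ D, Function.update z a α c' * f c (Sum.inr c') =
        ∑ c' ∈ D, z c' * f c (Sum.inr c') := fun c => Finset.sum_congr rfl fun c' hc' => by
      rw [Function.update_of_ne (ne_of_mem_of_not_mem hc' ha)]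
    refine ⟨Function.update z a α, fun c hc => ?_⟩
    rw [Finset.sum_insert ha, Function.update_self, hsum]
    rcases Finset.mem_insert.mp hc with rfl | hc
    · rw [hf.apply_inr_of_rk_le le_rfl, if_pos rfl]
      ring
    · rw [hf.apply_inr_of_rk_le (hmax c hc), if_neg (ne_of_mem_of_not_mem hc ha), hz c hc]
      ring

lemma phiX_le_deltaX (hf : IsExtKernel F N ω k ks f) {D ξ : Finset E} (hD : N.IsCutChans D ξ) :
    PhiX F N f ξ ≤ DeltaX F N f ξ D := by
  rw [PhiX, Submodule.span_le]
  rintro _ ⟨i, rfl⟩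
  obtain ⟨z, hz⟩ := hf.exists_sum_mul_apply_inr_eq D (fun c => f c (Sum.inl i))
  -- `φ` compares message `i` with the errors `z` on `D`; by the choice of `z` it kills `f̃_D`.
  let φ : (Fin ω ⊕ E → F) →ₗ[F] F :=
    LinearMap.proj (Sum.inl i) - ∑ c ∈ D, z c • LinearMap.proj (Sum.inr c)
  have hφ : ∀ e ∈ ξ, φ (f e) = 0 := by
    intro e he
    refine (Submodule.span_le (p := LinearMap.ker φ)).mpr ?_
      (hf.mem_span_of_isCutChans (hD.mono (Finset.singleton_subset_iff.mpr he)))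
    rintro _ (⟨c, hc, rfl⟩ | ⟨d, hd, rfl⟩)
    · simp [φ, hz c hc]
    · simp [φ, Pi.single_apply, show d ∉ D from hd]
  have hrow : rowX F N f ξ (Sum.inl i) = ∑ c ∈ D, z c • rowX F N f ξ (Sum.inr c) := by
    funext e
    simp only [rowX, Finset.sum_apply, Pi.smul_apply, smul_eq_mul]
    split_ifs with he
    · simpa [φ, sub_eq_zero] using hφ e he
    · simp
  change rowX F N f ξ (Sum.inl i) ∈ DeltaX F N f ξ D
  rw [hrow]
  exact Submodule.sum_mem _ fun c hc => Submodule.smul_mem _ _ (Submodule.subset_span ⟨c, hc, rfl⟩)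

end IsExtKernel

end ExtKernel

theorem statement9_general {V E : Type*} [Fintype E] [DecidableEq V] [DecidableEq E]
    (F : Type*) [Field F] (N : Network V E) (ω : ℕ)
    (k : E → E → F) (ks : Fin ω → E → F) (f : E → (Fin ω ⊕ E) → F)
    (hf : IsExtKernel F N ω k ks f) (hreg : ChannelRegular F N f)
    (ξ : Finset E) (hξ : ξ.Nonempty) :
    (ω ≤ N.minCutChans ξ → dminX F N f ξ ≤ N.minCutChans ξ - ω + 1) ∧
    (N.minCutChans ξ < ω → dminX F N f ξ ≤ 1) := by
  obtain ⟨D, hD, hDcard⟩ := N.exists_isCutChans_card_eq_minCutChans ξ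
  have hdmin := dminX_le_of_phiX_le_deltaX (hf.phiX_le_deltaX hD)
  rw [hreg ξ hξ, hDcard] at hdmin
  constructor <;> intro h
  · rwa [min_eq_left h] at hdmin
  · rwa [min_eq_right h.le, Nat.sub_self] at hdmin

/-- **Strongly Extended Singleton Bound.** For any channel-regular
`ω`-dimensional LNEC code and any nonempty collection `ξ ⊆ E` of channels,
`d_min^{(ξ)} ≤ δ_ξ + 1` if `C_ξ ≥ ω`, and `d_min^{(ξ)} ≤ 1` if `C_ξ < ω`. -/
theorem statement9 {V E : Type*} [Fintype V] [Fintype E] [DecidableEq V] [DecidableEq E]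
    (F : Type*) [Field F] [Fintype F] (N : Network V E) (ω : ℕ) (hω : 1 ≤ ω)
    (k : E → E → F) (ks : Fin ω → E → F) (f : E → (Fin ω ⊕ E) → F)
    (hf : IsExtKernel F N ω k ks f) (hreg : ChannelRegular F N f)
    (ξ : Finset E) (hξ : ξ.Nonempty) :
    (ω ≤ N.minCutChans ξ → dminX F N f ξ ≤ N.minCutChans ξ - ω + 1) ∧
    (N.minCutChans ξ < ω → dminX F N f ξ ≤ 1) :=
  statement9_general F N ω k ks f hf hreg ξ hξ
end
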